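/- Let (Ω, P) be a probability space, S a measurable space, and z₁, …, z_m : Ω → S independent identically distributed random variables with m ≥ 2. Let K : S × S → ℝ be a bounded measurable symmetric kernel with K(x,x) = 0 for all x, and define T := m^{−2} Σ_{i≠j} K(z_i, z_j). Then Var(T) ≤ 4 · Var(K(z₁, z₂)) / m. -/

import Mathlib

/-!
Write `T = m⁻² ∑_{p ∈ P} K(z_{p.1}, z_{p.2})`, where `P` is the set of the `m² - m` ordered pairs
of distinct indices, and expand the variance of the sum into the covariances of pairs of terms.
The terms for two pairs with no index in common are independent, so their covariance vanishes;
every other covariance is at most `σ² = Var K(z₁, z₂)`, since `2 cov[X, Y] ≤ Var X + Var Y` and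
all terms are distributed like `K(z₁, z₂)`. A pair meets at most `4m` pairs, hence
`Var (∑ …) ≤ m² · 4m · σ²`, and `Var T ≤ m⁻⁴ · 4m³σ² = 4σ²/m`.
-/

open MeasureTheory ProbabilityTheory Finset

section General

variable {Ω : Type*} [MeasurableSpace Ω] {μ : Measure Ω}

lemma two_mul_covariance_le_variance_add_variance [IsFiniteMeasure μ] {X Y : Ω → ℝ}
    (hX : MemLp X 2 μ) (hY : MemLp Y 2 μ) : 2 * cov[X, Y; μ] ≤ Var[X; μ] + Var[Y; μ] := by
  have h := variance_nonneg (X - Y) μ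
  rw [variance_sub hX hY] at h
  linarith

lemma variance_fun_sum_le_of_sparse_dependence [IsFiniteMeasure μ] {ι : Type*} (s : Finset ι)
    {Y : ι → Ω → ℝ} (R : ι → ι → Prop) [DecidableRel R] {v : ℝ} {N : ℕ}
    (hY : ∀ p ∈ s, MemLp (Y p) 2 μ) (hv : 0 ≤ v) (hvar : ∀ p ∈ s, Var[Y p; μ] ≤ v)
    (hindep : ∀ p ∈ s, ∀ q ∈ s, ¬ R p q → Y p ⟂ᵢ[μ] Y q)
    (hN : ∀ p ∈ s, #{q ∈ s | R p q} ≤ N) :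
    Var[fun ω ↦ ∑ p ∈ s, Y p ω; μ] ≤ #s * (N * v) := by
  have hcov : ∀ p ∈ s, ∀ q ∈ s, cov[Y p, Y q; μ] ≤ if R p q then v else 0 := by
    intro p hp q hq
    split_ifs with hpq
    · linarith [two_mul_covariance_le_variance_add_variance (hY p hp) (hY q hq),
        hvar p hp, hvar q hq]
    · exact ((hindep p hp q hq hpq).covariance_eq_zero (hY p hp) (hY q hq)).le
  rw [variance_fun_sum' hY]
  calc ∑ p ∈ s, ∑ q ∈ s, cov[Y p, Y q; μ]
      ≤ ∑ p ∈ s, ∑ q ∈ s, if R p q then v else 0 :=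
        sum_le_sum fun p hp ↦ sum_le_sum fun q hq ↦ hcov p hp q hq
    _ = ∑ p ∈ s, #{q ∈ s | R p q} * v := by
        simp only [sum_ite, sum_const_zero, add_zero, sum_const, nsmul_eq_mul]
    _ ≤ ∑ _p ∈ s, N * v :=
        sum_le_sum fun p hp ↦ mul_le_mul_of_nonneg_right (by exact_mod_cast hN p hp) hv
    _ = #s * (N * v) := by rw [sum_const, nsmul_eq_mul]

lemma IdentDistrib.prodMk_of_indepFun {Ω' α β : Type*} [MeasurableSpace Ω'] [MeasurableSpace α]
    [MeasurableSpace β] {ν : Measure Ω'} [IsFiniteMeasure μ] [IsFiniteMeasure ν]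
    {X : Ω → α} {Y : Ω → β} {X' : Ω' → α} {Y' : Ω' → β}
    (hX : IdentDistrib X X' μ ν) (hY : IdentDistrib Y Y' μ ν)
    (hXY : X ⟂ᵢ[μ] Y) (hXY' : X' ⟂ᵢ[ν] Y') :
    IdentDistrib (fun ω ↦ (X ω, Y ω)) (fun ω ↦ (X' ω, Y' ω)) μ ν where
  aemeasurable_fst := hX.aemeasurable_fst.prodMk hY.aemeasurable_fst
  aemeasurable_snd := hX.aemeasurable_snd.prodMk hY.aemeasurable_snd
  map_eq := by
    rw [(indepFun_iff_map_prod_eq_prod_map_map hX.aemeasurable_fst hY.aemeasurable_fst).1 hXY,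
      (indepFun_iff_map_prod_eq_prod_map_map hX.aemeasurable_snd hY.aemeasurable_snd).1 hXY',
      hX.map_eq, hY.map_eq]

lemma card_filter_meets_pair_le {α : Type*} [Fintype α] [DecidableEq α] (i j : α)
    (t : Finset (α × α)) :
    #{q ∈ t | q.1 = i ∨ q.1 = j ∨ q.2 = i ∨ q.2 = j} ≤ 4 * Fintype.card α := by
  have hsub : {q ∈ t | q.1 = i ∨ q.1 = j ∨ q.2 = i ∨ q.2 = j} ⊆
      ({i, j} ×ˢ univ) ∪ (univ ×ˢ {i, j}) := by
    intro q
    simp only [mem_filter, mem_union, mem_product, mem_insert, mem_singleton, mem_univ, and_true,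
      true_and]
    tauto
  have hij : #({i, j} : Finset α) ≤ 2 := card_le_two
  calc _ ≤ #(({i, j} ×ˢ univ) ∪ (univ ×ˢ {i, j})) := card_le_card hsub
    _ ≤ #({i, j} ×ˢ (univ : Finset α)) + #((univ : Finset α) ×ˢ {i, j}) := card_union_le _ _
    _ ≤ 4 * Fintype.card α := by
      rw [card_product, card_product, card_univ]
      nlinarith

lemma Finset.sum_sum_ite_eq_sum_offDiag {ι M : Type*} [Fintype ι] [DecidableEq ι]
    [AddCommMonoid M] (f : ι → ι → M) :
    ∑ i, ∑ j, (if i = j then 0 else f i j) = ∑ p ∈ univ.offDiag, f p.1 p.2 := by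
  rw [← Fintype.sum_prod_type', sum_ite, sum_const_zero, zero_add]
  congr 1
  ext p
  simp [mem_offDiag]

end General

section Kernel

variable {ι Ω S : Type*} [MeasurableSpace Ω] {μ : Measure Ω} [IsFiniteMeasure μ]
  [MeasurableSpace S] {z : ι → Ω → S} {K : S → S → ℝ}

lemma variance_sum_offDiag_kernel_le [Fintype ι] [DecidableEq ι] (hmeas : ∀ i, Measurable (z i))
    (hindep : iIndepFun z μ) (hident : ∀ i j, IdentDistrib (z i) (z j) μ μ)
    (hK : Measurable fun p : S × S ↦ K p.1 p.2) (hKbdd : ∃ C : ℝ, ∀ x y, |K x y| ≤ C)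
    {i₀ i₁ : ι} (h₀₁ : i₀ ≠ i₁) :
    Var[fun ω ↦ ∑ p ∈ univ.offDiag, K (z p.1 ω) (z p.2 ω); μ]
      ≤ 4 * Fintype.card ι ^ 3 * Var[fun ω ↦ K (z i₀ ω) (z i₁ ω); μ] := by
  obtain ⟨C, hC⟩ := hKbdd
  set Y : ι × ι → Ω → ℝ := fun p ω ↦ K (z p.1 ω) (z p.2 ω)
  have hY : ∀ p, MemLp (Y p) 2 μ := fun p ↦
    .of_bound (hK.comp ((hmeas p.1).prodMk (hmeas p.2))).aestronglyMeasurable C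
      (ae_of_all _ fun ω ↦ hC _ _)
  have hvar : ∀ p ∈ univ.offDiag, Var[Y p; μ] = Var[Y (i₀, i₁); μ] := fun p hp ↦
    ((IdentDistrib.prodMk_of_indepFun (hident _ _) (hident _ _)
      (hindep.indepFun (mem_offDiag.1 hp).2.2) (hindep.indepFun h₀₁)).comp hK).variance_eq
  have hindepY : ∀ p ∈ univ.offDiag, ∀ q ∈ univ.offDiag,
      ¬ (q.1 = p.1 ∨ q.1 = p.2 ∨ q.2 = p.1 ∨ q.2 = p.2) → Y p ⟂ᵢ[μ] Y q := by
    intro p _ q _ hpq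
    push Not at hpq
    exact (hindep.indepFun_prodMk_prodMk hmeas _ _ _ _ hpq.1.symm hpq.2.2.1.symm
      hpq.2.1.symm hpq.2.2.2.symm).comp hK hK
  have hσ := variance_nonneg (Y (i₀, i₁)) μ
  calc Var[fun ω ↦ ∑ p ∈ univ.offDiag, Y p ω; μ]
      ≤ #(univ : Finset ι).offDiag * ((4 * Fintype.card ι : ℕ) * Var[Y (i₀, i₁); μ]) :=
        variance_fun_sum_le_of_sparse_dependence _ _ (fun p _ ↦ hY p) hσ
          (fun p hp ↦ (hvar p hp).le) hindepY
          (fun p _ ↦ card_filter_meets_pair_le p.1 p.2 _)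
    _ ≤ Fintype.card ι ^ 2 * (4 * Fintype.card ι * Var[Y (i₀, i₁); μ]) := by
        push_cast
        gcongr
        have hcard : #(univ : Finset ι).offDiag ≤ Fintype.card ι ^ 2 := by
          rw [offDiag_card, card_univ, sq]
          exact Nat.sub_le _ _
        exact_mod_cast hcard
    _ = 4 * Fintype.card ι ^ 3 * Var[Y (i₀, i₁); μ] := by ring

end Kernel

/-- Variance bound for the V-statistic of a symmetric kernel vanishing on the
diagonal, built from i.i.d. samples. -/
theorem vstatistic_variance_bound
    {Ω S : Type*} [MeasureSpace Ω] [IsProbabilityMeasure (ℙ : Measure Ω)]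
    [MeasurableSpace S]
    (m : ℕ) (hm : 2 ≤ m) (z : Fin m → Ω → S)
    (hmeas : ∀ i, Measurable (z i))
    (hindep : iIndepFun z ℙ)
    (hident : ∀ i j, IdentDistrib (z i) (z j) ℙ ℙ)
    (K : S → S → ℝ)
    (hKmeas : Measurable fun p : S × S => K p.1 p.2)
    (hKbdd : ∃ C : ℝ, ∀ x y, |K x y| ≤ C) :
    variance (fun ω => ((m : ℝ) ^ 2)⁻¹ *
        ∑ i : Fin m, ∑ j : Fin m, if i = j then 0 else K (z i ω) (z j ω)) ℙ
      ≤ 4 * variance (fun ω => K (z ⟨0, by omega⟩ ω) (z ⟨1, by omega⟩ ω)) ℙ / m := by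
  have hbound := variance_sum_offDiag_kernel_le hmeas hindep hident hKmeas hKbdd
    (i₀ := ⟨0, by omega⟩) (i₁ := ⟨1, by omega⟩) (by simp)
  rw [Fintype.card_fin] at hbound
  simp_rw [Finset.sum_sum_ite_eq_sum_offDiag fun i j ↦ K (z i _) (z j _)]
  rw [variance_const_mul]
  refine (mul_le_mul_of_nonneg_left hbound (by positivity)).trans_eq ?_
  field_simp
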